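/- The Wiener index of the zero divisor graph Γ(Z/p^3 Z) equals (p−1)(2p^3 − 3p − 2)/2. -/

import Mathlib

open scoped Classical

/-- The zero divisor graph of `ZMod n`: vertices are nonzero zero divisors,
`x ~ y` iff `x ≠ y` and `x * y = 0`. -/
def zdGraph (n : ℕ) : SimpleGraph {x : ZMod n // x ≠ 0 ∧ ∃ y ≠ 0, x * y = 0} where
  Adj a b := a ≠ b ∧ (a : ZMod n) * (b : ZMod n) = 0
  symm := by
    constructor
    intro a b h
    exact ⟨h.1.symm, by rw [mul_comm]; exact h.2⟩
  loopless := ⟨fun a h => h.1 rfl⟩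

/-!
A nonzero `x ∈ ℤ/p³` is a zero divisor iff `p ∣ x`, and two such elements multiply to `0` iff
one of them is divisible by `p²`. So `Γ(ℤ/p³)` is the join of a clique on the `p - 1` nonzero
multiples of `p²` with an edgeless graph on the other `p² - p` vertices: distinct vertices are
adjacent unless both lie in the edgeless part, and then they are at distance `2` through `p²`.
Summing over ordered pairs gives
`(p² - 1)(p² - 2) + (p² - p)(p² - p - 1) = (p - 1)(2p³ - 3p - 2)`.
-/

open Finset

theorem Finset.sum_sum_ite_eq_zero_one {α : Type*} (s : Finset α) :
    ∑ a ∈ s, ∑ b ∈ s, (if a = b then 0 else 1) = #s * (#s - 1) := by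
  have hrow : ∀ a ∈ s, ∑ b ∈ s, (if a = b then 0 else 1) = #s - 1 := fun a ha => by
    rw [sum_ite, sum_const_zero, zero_add, sum_const, smul_eq_mul, mul_one, filter_ne,
      card_erase_of_mem ha]
  rw [sum_congr rfl hrow, sum_const, smul_eq_mul]

namespace SimpleGraph

variable {V : Type*} {G : SimpleGraph V} {P : V → Prop}

theorem dist_eq_of_adj_iff_ne_and_or (hG : ∀ a b, G.Adj a b ↔ a ≠ b ∧ (P a ∨ P b))
    {c : V} (hc : P c) (a b : V) :
    G.dist a b = if a = b then 0 else if P a ∨ P b then 1 else 2 := by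
  split_ifs with hab hPab
  · rw [hab, dist_self]
  · exact dist_eq_one_iff_adj.mpr ((hG a b).mpr ⟨hab, hPab⟩)
  · push Not at hPab
    have hac : G.Adj a c := (hG a c).mpr ⟨by rintro rfl; exact hPab.1 hc, .inr hc⟩
    have hbc : G.Adj b c := (hG b c).mpr ⟨by rintro rfl; exact hPab.2 hc, .inr hc⟩
    have hnadj : ¬G.Adj a b := fun h => by simp_all
    have hcommon : c ∈ G.commonNeighbors a b := G.mem_commonNeighbors.mpr ⟨hac, hbc⟩
    rw [dist, edist_eq_two_iff.mpr ⟨hab, hnadj, c, hcommon⟩]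
    rfl

theorem sum_sum_dist_of_adj_iff_ne_and_or [Fintype V] [DecidablePred P]
    (hG : ∀ a b, G.Adj a b ↔ a ≠ b ∧ (P a ∨ P b)) {c : V} (hc : P c) :
    ∑ a, ∑ b, G.dist a b =
      Fintype.card V * (Fintype.card V - 1) + #{a | ¬P a} * (#{a | ¬P a} - 1) := by
  have hsplit : ∀ a b, G.dist a b = (if a = b then 0 else 1) +
      if ¬P a then (if ¬P b then (if a = b then 0 else 1) else 0) else 0 := fun a b => by
    rw [dist_eq_of_adj_iff_ne_and_or hG hc]
    split_ifs <;> simp_all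
  simp_rw [hsplit, sum_add_distrib, sum_ite_irrel, sum_const_zero, ← sum_filter]
  rw [sum_sum_ite_eq_zero_one, sum_sum_ite_eq_zero_one, card_univ]

end SimpleGraph

namespace ZMod

variable {p : ℕ} [hp : Fact p.Prime]

theorem exists_ne_zero_mul_eq_zero_iff_dvd_val {n : ℕ} (hn : n ≠ 0) (x : ZMod (p ^ n)) :
    (∃ y ≠ 0, x * y = 0) ↔ p ∣ x.val := by
  have : NeZero (p ^ n) := ⟨pow_ne_zero n hp.out.ne_zero⟩
  rw [← not_iff_not, ← isUnit_natCast_iff_not_dvd_pow hp.out (Nat.pos_of_ne_zero hn),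
    natCast_zmod_val, isUnit_iff_mem_nonZeroDivisors_of_finite, mem_nonZeroDivisors_iff_left]
  push Not
  exact ⟨fun h y hy => by_contra fun h' => h y h' hy, fun h y hy0 hy => hy0 (h y hy)⟩

theorem mul_eq_zero_iff_sq_dvd_val {x y : ZMod (p ^ 3)} (hx : p ∣ x.val) (hy : p ∣ y.val) :
    x * y = 0 ↔ p ^ 2 ∣ x.val ∨ p ^ 2 ∣ y.val := by
  have : NeZero (p ^ 3) := ⟨pow_ne_zero 3 hp.out.ne_zero⟩
  obtain ⟨a, ha⟩ := hx
  obtain ⟨b, hb⟩ := hy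
  have hp0 : 0 < p := hp.out.pos
  have hxy : x * y = ((x.val * y.val : ℕ) : ZMod (p ^ 3)) := by
    rw [Nat.cast_mul, natCast_zmod_val, natCast_zmod_val]
  rw [hxy, natCast_eq_zero_iff, ha, hb, show p * a * (p * b) = p ^ 2 * (a * b) by ring,
    pow_succ, Nat.mul_dvd_mul_iff_left (by positivity), hp.out.dvd_mul, pow_two,
    Nat.mul_dvd_mul_iff_left hp0, Nat.mul_dvd_mul_iff_left hp0]

theorem card_filter_dvd_val {N d : ℕ} [NeZero N] (hd : d ∣ N) :
    #{x : ZMod N | d ∣ x.val} = N / d := by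
  have hd0 : 0 < d := Nat.pos_of_dvd_of_pos hd (NeZero.pos N)
  have hval : ∀ m < N / d, ((d * m : ℕ) : ZMod N).val = d * m := fun m hm =>
    val_cast_of_lt ((Nat.lt_div_iff_mul_lt' hd m).mp hm)
  rw [← card_range (N / d)]
  refine card_nbij' (fun x => x.val / d) (fun m => ((d * m : ℕ) : ZMod N)) ?_ ?_ ?_ ?_
  · intro x _
    simpa using Nat.div_lt_div_of_lt_of_dvd hd (val_lt x)
  · intro m hm
    rw [coe_range, Set.mem_Iio] at hm
    simp only [coe_filter, mem_univ, true_and, Set.mem_ofPred_eq, hval m hm]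
    exact dvd_mul_right d m
  · intro x hx
    simp only [coe_filter, mem_univ, true_and, Set.mem_ofPred_eq] at hx
    simp [Nat.mul_div_cancel' hx]
  · intro m hm
    rw [coe_range, Set.mem_Iio] at hm
    dsimp only
    rw [hval m hm, Nat.mul_div_cancel_left m hd0]

theorem card_filter_ne_zero_and_dvd_val {N d : ℕ} [NeZero N] (hd : d ∣ N) :
    #{x : ZMod N | x ≠ 0 ∧ d ∣ x.val} = N / d - 1 := by
  rw [← card_filter_dvd_val hd, ← filter_filter, filter_ne', filter_erase,
    card_erase_of_mem (by simp)]

theorem card_filter_dvd_val_and_not_dvd_val {N d e : ℕ} [NeZero N] (hed : e ∣ d)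
    (hd : d ∣ N) :
    #{x : ZMod N | e ∣ x.val ∧ ¬d ∣ x.val} = N / e - N / d := by
  rw [filter_and_not, card_sdiff_of_subset (monotone_filter_right _ fun x _ => hed.trans),
    card_filter_dvd_val hd, card_filter_dvd_val (hed.trans hd)]

end ZMod

section ZeroDivisorGraph

variable {p : ℕ} [hp : Fact p.Prime]

theorem zero_divisor_pow_three_iff (x : ZMod (p ^ 3)) :
    (x ≠ 0 ∧ ∃ y ≠ 0, x * y = 0) ↔ x ≠ 0 ∧ p ∣ x.val :=
  and_congr_right fun _ => ZMod.exists_ne_zero_mul_eq_zero_iff_dvd_val three_ne_zero x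

theorem zdGraph_pow_three_adj_iff (a b : {x : ZMod (p ^ 3) // x ≠ 0 ∧ ∃ y ≠ 0, x * y = 0}) :
    (zdGraph (p ^ 3)).Adj a b ↔ a ≠ b ∧ (p ^ 2 ∣ a.1.val ∨ p ^ 2 ∣ b.1.val) :=
  and_congr_right fun _ => ZMod.mul_eq_zero_iff_sq_dvd_val
    ((zero_divisor_pow_three_iff _).mp a.2).2 ((zero_divisor_pow_three_iff _).mp b.2).2

theorem card_zero_divisors_pow_three :
    Fintype.card {x : ZMod (p ^ 3) // x ≠ 0 ∧ ∃ y ≠ 0, x * y = 0} = p ^ 2 - 1 := by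
  have : NeZero (p ^ 3) := ⟨pow_ne_zero 3 hp.out.ne_zero⟩
  rw [Fintype.card_subtype, Finset.filter_congr fun x _ => zero_divisor_pow_three_iff x,
    ZMod.card_filter_ne_zero_and_dvd_val (dvd_pow_self p three_ne_zero),
    Nat.div_eq_of_eq_mul_left hp.out.pos (by ring : p ^ 3 = p ^ 2 * p)]

theorem card_zero_divisors_pow_three_filter_not_sq_dvd :
    #{a : {x : ZMod (p ^ 3) // x ≠ 0 ∧ ∃ y ≠ 0, x * y = 0} | ¬p ^ 2 ∣ a.1.val} =
      p ^ 2 - p := by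
  have : NeZero (p ^ 3) := ⟨pow_ne_zero 3 hp.out.ne_zero⟩
  rw [← Fintype.card_subtype, Fintype.card_congr (Equiv.subtypeSubtypeEquivSubtypeInter
    (fun x : ZMod (p ^ 3) => x ≠ 0 ∧ ∃ y ≠ 0, x * y = 0) (fun x => ¬p ^ 2 ∣ x.val)),
    Fintype.card_subtype]
  have hmem (x : ZMod (p ^ 3)) (hx : ¬p ^ 2 ∣ x.val) :
      (x ≠ 0 ∧ ∃ y : ZMod (p ^ 3), y ≠ 0 ∧ x * y = 0) ↔ p ∣ x.val :=
    (zero_divisor_pow_three_iff x).trans (and_iff_right_of_imp fun _ => by rintro rfl; simp at hx)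
  rw [filter_congr fun x _ => and_congr_left (hmem x), ZMod.card_filter_dvd_val_and_not_dvd_val
    (dvd_pow_self p two_ne_zero) (pow_dvd_pow p (by norm_num)),
    Nat.div_eq_of_eq_mul_left hp.out.pos (by ring : p ^ 3 = p ^ 2 * p),
    Nat.div_eq_of_eq_mul_left (pow_pos hp.out.pos 2) (by ring : p ^ 3 = p * p ^ 2)]

theorem exists_zero_divisor_pow_three_sq_dvd_val :
    ∃ c : {x : ZMod (p ^ 3) // x ≠ 0 ∧ ∃ y ≠ 0, x * y = 0}, p ^ 2 ∣ c.1.val := by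
  have hval : ((p ^ 2 : ℕ) : ZMod (p ^ 3)).val = p ^ 2 :=
    ZMod.val_cast_of_lt (Nat.pow_lt_pow_right hp.out.one_lt (by norm_num))
  have hne : ((p ^ 2 : ℕ) : ZMod (p ^ 3)) ≠ 0 := by
    rw [← ZMod.val_ne_zero, hval]
    exact pow_ne_zero 2 hp.out.ne_zero
  refine ⟨⟨(p ^ 2 : ℕ), (zero_divisor_pow_three_iff _).mpr ⟨hne, ?_⟩⟩, ?_⟩ <;>
    simp only [hval, dvd_pow_self p two_ne_zero, dvd_refl]

end ZeroDivisorGraph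

/-- The double sum runs over ordered pairs, so it is twice the Wiener index. -/
theorem wiener_index_zd_graph_p_cubed (p : ℕ) [Fact p.Prime] :
    ∑ x : {x : ZMod (p ^ 3) // x ≠ 0 ∧ ∃ y ≠ 0, x * y = 0},
      ∑ y : {x : ZMod (p ^ 3) // x ≠ 0 ∧ ∃ y ≠ 0, x * y = 0},
        (zdGraph (p ^ 3)).dist x y = (p - 1) * (2 * p ^ 3 - 3 * p - 2) := by
  obtain ⟨c, hc⟩ := exists_zero_divisor_pow_three_sq_dvd_val (p := p)
  rw [SimpleGraph.sum_sum_dist_of_adj_iff_ne_and_or zdGraph_pow_three_adj_iff hc,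
    card_zero_divisors_pow_three, card_zero_divisors_pow_three_filter_not_sq_dvd]
  have hp : 2 ≤ p := (Fact.out : p.Prime).two_le
  have hsq : p + 1 ≤ p ^ 2 := by nlinarith
  have hcube : 3 * p + 2 ≤ 2 * p ^ 3 := by nlinarith
  simp only [Nat.sub_sub]
  zify [hsq, hcube, (by omega : 1 ≤ p), (by omega : 1 + 1 ≤ p ^ 2), (by omega : 1 ≤ p ^ 2),
    (by omega : p ≤ p ^ 2)]
  ring
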